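/- Principal Type Proposition: If an untyped linear λ-term t is typable in the linear type assignment system (i.e., Γ ⊢ t:A is derivable for some context Γ and type A), then t has a principal typing: there is a typing Γ0 ⊢ t : PT(t) that is derivable and such that whenever Γ' ⊢ t : A' is derivable, A' is an instance of PT(t) and Γ' is the corresponding instance of Γ0. -/

import Mathlib

/-! Linear λ-calculus preamble -/

/-- Types of the linear λ-calculus: type variables, tensor product, linear implication. -/
inductive Ty : Type
  | tvar : ℕ → Ty
  | tensor : Ty → Ty → Ty
  | arrow : Ty → Ty → Ty
deriving DecidableEq

/-- Terms of the linear λ-calculus. -/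
inductive Tm : Type
  | var : ℕ → Tm
  | app : Tm → Tm → Tm
  | lam : ℕ → Tm → Tm
  | pair : Tm → Tm → Tm
  | letp : ℕ → ℕ → Tm → Tm → Tm
deriving DecidableEq

/-- Free variables of a term. -/
def Tm.fv : Tm → Finset ℕ
  | .var x => {x}
  | .app t s => t.fv ∪ s.fv
  | .lam x t => t.fv \ {x}
  | .pair t s => t.fv ∪ s.fv
  | .letp x y s t => s.fv ∪ (t.fv \ {x, y})

/-- Substitution of a term for a variable. -/
def Tm.subst : Tm → ℕ → Tm → Tm
  | .var y, x, s => if y = x then s else .var y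
  | .app t u, x, s => .app (t.subst x s) (u.subst x s)
  | .lam y t, x, s => if y = x then .lam y t else .lam y (t.subst x s)
  | .pair t u, x, s => .pair (t.subst x s) (u.subst x s)
  | .letp y z u t, x, s =>
      .letp y z (u.subst x s) (if x = y ∨ x = z then t else t.subst x s)

/-- Typing contexts: finite lists of typed variables. -/
abbrev Ctxt := List (ℕ × Ty)

/-- The linear type assignment system. -/
inductive Typed : Ctxt → Tm → Ty → Prop
  | var (x : ℕ) (A : Ty) : Typed [(x, A)] (.var x) A
  | exch (Γ Δ : Ctxt) (x y : ℕ) (A B : Ty) (t : Tm) (C : Ty) :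
      Typed (Γ ++ (x, A) :: (y, B) :: Δ) t C →
      Typed (Γ ++ (y, B) :: (x, A) :: Δ) t C
  | lam (x : ℕ) (A : Ty) (Γ : Ctxt) (t : Tm) (B : Ty) :
      Typed ((x, A) :: Γ) t B → Typed Γ (.lam x t) (.arrow A B)
  | app (Γ Δ : Ctxt) (t s : Tm) (A B : Ty) :
      Typed Γ t (.arrow A B) → Typed Δ s A → Typed (Γ ++ Δ) (.app t s) B
  | pair (Γ Δ : Ctxt) (s t : Tm) (A B : Ty) :
      Typed Γ s A → Typed Δ t B → Typed (Γ ++ Δ) (.pair s t) (.tensor A B)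
  | letp (Γ Δ : Ctxt) (s t : Tm) (x y : ℕ) (A B C : Ty) :
      Typed Γ s (.tensor A B) → Typed ((x, A) :: (y, B) :: Δ) t C →
      Typed (Γ ++ Δ) (.letp x y s t) C

/-- One-hole contexts. -/
inductive Cx : Type
  | hole : Cx
  | appL : Cx → Tm → Cx
  | appR : Tm → Cx → Cx
  | pairL : Cx → Tm → Cx
  | pairR : Tm → Cx → Cx
  | lam : ℕ → Cx → Cx
  | letL : ℕ → ℕ → Cx → Tm → Cx
  | letR : ℕ → ℕ → Tm → Cx → Cx

/-- Plugging a term into a one-hole context. -/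
def Cx.plug : Cx → Tm → Tm
  | .hole, u => u
  | .appL C t, u => .app (C.plug u) t
  | .appR t C, u => .app t (C.plug u)
  | .pairL C t, u => .pair (C.plug u) t
  | .pairR t C, u => .pair t (C.plug u)
  | .lam x C, u => .lam x (C.plug u)
  | .letL x y C t, u => .letp x y (C.plug u) t
  | .letR x y t C, u => .letp x y t (C.plug u)

/-- Variables captured by a context. -/
def Cx.cv : Cx → Finset ℕ
  | .hole => ∅
  | .appL C _ => C.cv
  | .appR _ C => C.cv
  | .pairL C _ => C.cv
  | .pairR _ C => C.cv
  | .lam x C => insert x C.cv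
  | .letL _ _ C _ => C.cv
  | .letR x y _ C => insert x (insert y C.cv)

/-- Free variables of a context. -/
def Cx.fv : Cx → Finset ℕ
  | .hole => ∅
  | .appL C t => C.fv ∪ t.fv
  | .appR t C => t.fv ∪ C.fv
  | .pairL C t => C.fv ∪ t.fv
  | .pairR t C => t.fv ∪ C.fv
  | .lam x C => C.fv \ {x}
  | .letL x y C t => C.fv ∪ (t.fv \ {x, y})
  | .letR x y t C => t.fv ∪ (C.fv \ {x, y})

/-- The base βη-reduction rules. -/
inductive StepBase : Tm → Tm → Prop
  | beta1 (x : ℕ) (t s : Tm) : StepBase (.app (.lam x t) s) (t.subst x s)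
  | beta2 (x y : ℕ) (u v w : Tm) :
      StepBase (.letp x y (.pair u v) w) ((w.subst x u).subst y v)
  | eta1 (x : ℕ) (t : Tm) : x ∉ t.fv → StepBase (.lam x (.app t (.var x))) t
  | eta2 (x y : ℕ) (t : Tm) : x ≠ y → x ∉ t.fv → y ∉ t.fv →
      StepBase (.letp x y t (.pair (.var x) (.var y))) t

/-- Closure of a relation under arbitrary one-hole contexts. -/
def Congr (R : Tm → Tm → Prop) (t u : Tm) : Prop :=
  ∃ (C : Cx) (a b : Tm), R a b ∧ t = C.plug a ∧ u = C.plug b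

/-- One-step βη-reduction (congruent closure of the base rules): →βη. -/
def Step : Tm → Tm → Prop := Congr StepBase

/-- The base commutative conversion rule ↔c. -/
def CommBase (t u : Tm) : Prop :=
  ∃ (C : Cx) (x y : ℕ) (s w : Tm),
    x ∉ C.fv ∧ y ∉ C.fv ∧ (∀ z ∈ C.cv, z ∉ s.fv) ∧
    t = C.plug (.letp x y s w) ∧ u = .letp x y s (C.plug w)

/-- The congruent equivalence relation =c generated by ↔c. -/
def Ceq : Tm → Tm → Prop := Relation.EqvGen (Congr CommBase)

/-- One-step reduction modulo commutative conversion: →βηc. -/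
def StepC (t u : Tm) : Prop := ∃ t' u', Ceq t t' ∧ Step t' u' ∧ Ceq u' u

/-- The equality =βηc : the least congruent equivalence relation containing ↔c and →βηc. -/
def BEqc : Tm → Tm → Prop :=
  Relation.EqvGen (Congr (fun a b => CommBase a b ∨ StepC a b))

/-- Type substitutions and their action on types. -/
def Ty.subst : Ty → (ℕ → Ty) → Ty
  | .tvar a, θ => θ a
  | .tensor A B, θ => .tensor (A.subst θ) (B.subst θ)
  | .arrow A B, θ => .arrow (A.subst θ) (B.subst θ)

/-- Action of a type substitution on a typing context. -/
def CtxtSubst (Γ : Ctxt) (θ : ℕ → Ty) : Ctxt := Γ.map (fun p => (p.1, p.2.subst θ))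

/-- `A` is the principal type of the closed term `t`. -/
def IsPT (t : Tm) (A : Ty) : Prop :=
  Typed [] t A ∧ ∀ A', Typed [] t A' → ∃ θ, A' = A.subst θ

/-- Iterated linear implication `A1->...->An->B`. -/
def arrows (As : List Ty) (B : Ty) : Ty := As.foldr .arrow B

/-- Iterated application `t s1 ⋯ sn`. -/
def apps (t : Tm) (ss : List Tm) : Tm := ss.foldl .app t

/-- `t` is poly-typable by `A1->...->An->B` with respect to closed terms `s1,...,sn`
of types `A1,...,An`. -/
def PolyTypableN (t : Tm) (As : List Ty) (B : Ty) (ss : List Tm) : Prop :=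
  (∃ (As' : List Ty) (B' : Ty), As'.length = As.length ∧ Typed [] t (arrows As' B')) ∧
  List.Forall₂ (fun s A => Typed [] s A) ss As ∧
  ∃ (θ : ℕ → Ty) (PTt : Ty) (As'' : List Ty),
    IsPT t PTt ∧ PTt.subst θ = arrows As'' B ∧
    List.Forall₂ (fun s A'' => ∃ P, IsPT s P ∧ P.subst θ = A'') ss As''


/-- Number of (non-binding) occurrences of the variable `x` in a term. -/
def Tm.uses : Tm → ℕ → ℕ
  | .var y, x => if y = x then 1 else 0
  | .app t s, x => t.uses x + s.uses x
  | .lam _ t, x => t.uses x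
  | .pair t s, x => t.uses x + s.uses x
  | .letp _ _ s t, x => s.uses x + t.uses x

/-- Number of binding occurrences of the variable `x` in a term. -/
def Tm.binds : Tm → ℕ → ℕ
  | .var _, _ => 0
  | .app t s, x => t.binds x + s.binds x
  | .lam y t, x => (if y = x then 1 else 0) + t.binds x
  | .pair t s, x => t.binds x + s.binds x
  | .letp y z s t, x =>
      (if y = x then 1 else 0) + (if z = x then 1 else 0) + s.binds x + t.binds x

/-- An untyped linear λ-term: each free or bound variable occurs exactly once
(each variable is used at most once, is bound at most once, and a bound variable is
used exactly once, with its use captured by its binder). -/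
def Tm.LinearTm (t : Tm) : Prop :=
  (∀ x, t.uses x ≤ 1) ∧ (∀ x, t.binds x ≤ 1) ∧
  (∀ x, t.binds x = 1 → t.uses x = 1 ∧ x ∉ t.fv)

/-!
Induction on the term, as in Hindley–Milner type inference. A variable gets the typing
`x : α ⊢ x : α`. For `λx.u`, linearity makes `x` occur exactly once in the principal context
of `u`, so it can be moved into the type. For an application or a `let`, the principal typings
of the two subterms are renamed apart and the one equation the rule imposes on their types
(`A₁ = A₂ ⊸ α`, resp. `A_s = A_x ⊗ A_y`) is solved by a most general unifier, which exists by
Robinson's unification algorithm; a pair imposes no equation.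
-/

namespace Ty

def tvars : Ty → Finset ℕ
  | tvar a => {a}
  | tensor A B | arrow A B => A.tvars ∪ B.tvars

def size : Ty → ℕ
  | tvar _ => 1
  | tensor A B | arrow A B => A.size + B.size + 1

theorem one_le_size (A : Ty) : 1 ≤ A.size := by
  cases A <;> simp [size]

theorem subst_subst (A : Ty) (σ ρ : ℕ → Ty) :
    (A.subst σ).subst ρ = A.subst fun v => (σ v).subst ρ := by
  induction A with
  | tvar a => rfl
  | tensor A B ihA ihB | arrow A B ihA ihB => simp [subst, ihA, ihB]

theorem subst_congr {A : Ty} {σ τ : ℕ → Ty} (h : ∀ v ∈ A.tvars, σ v = τ v) :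
    A.subst σ = A.subst τ := by
  induction A with
  | tvar a => exact h a (by simp [tvars])
  | tensor A B ihA ihB | arrow A B ihA ihB =>
      simp only [tvars, Finset.mem_union] at h
      simp [subst, ihA fun v hv => h v (.inl hv), ihB fun v hv => h v (.inr hv)]

@[simp]
theorem subst_tvar (A : Ty) : A.subst tvar = A := by
  induction A with
  | tvar a => rfl
  | tensor A B ihA ihB | arrow A B ihA ihB => simp [subst, ihA, ihB]

theorem size_subst_le {a : ℕ} {B : Ty} (h : a ∈ B.tvars) (σ : ℕ → Ty) :
    (σ a).size ≤ (B.subst σ).size := by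
  induction B with
  | tvar b =>
      obtain rfl : a = b := by simpa [tvars] using h
      exact le_rfl
  | tensor A B ihA ihB | arrow A B ihA ihB =>
      simp only [tvars, Finset.mem_union] at h
      rcases h with h | h
      · have := ihA h; simp only [subst, size]; omega
      · have := ihB h; simp only [subst, size]; omega

theorem subst_ne_of_mem_tvars {a : ℕ} {B : Ty} (h : a ∈ B.tvars) (hB : B ≠ tvar a)
    (σ : ℕ → Ty) : σ a ≠ B.subst σ := by
  intro e
  cases B with
  | tvar b => simp_all [tvars]
  | tensor A C | arrow A C =>
      simp only [tvars, Finset.mem_union] at h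
      have := congrArg size e
      rcases h with h | h
      · have := size_subst_le h σ; simp only [subst, size] at *; omega
      · have := size_subst_le h σ; simp only [subst, size] at *; omega

def single (a : ℕ) (B : Ty) : ℕ → Ty := Function.update tvar a B

theorem subst_single_of_notMem {a : ℕ} {A B : Ty} (h : a ∉ A.tvars) :
    A.subst (single a B) = A := by
  rw [← A.subst_tvar, subst_subst]
  refine subst_congr fun v hv => ?_
  have : v ≠ a := by rintro rfl; exact h hv
  simp [single, this, subst]

theorem tvars_subst_single {a : ℕ} {B : Ty} (hB : a ∉ B.tvars) (A : Ty) :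
    (A.subst (single a B)).tvars ⊆ (A.tvars ∪ B.tvars).erase a := by
  induction A with
  | tvar b =>
      by_cases hb : b = a
      · subst hb
        intro v hv
        simp only [subst, single, Function.update_self] at hv
        exact Finset.mem_erase.2 ⟨by rintro rfl; exact hB hv, by simp [hv]⟩
      · simp [subst, single, hb, tvars]
  | tensor A C ihA ihC | arrow A C ihA ihC =>
      intro v hv
      simp only [subst, tvars, Finset.mem_union] at hv
      rcases hv with hv | hv
      · have := ihA hv; simp only [tvars, Finset.mem_erase, Finset.mem_union] at this ⊢; tauto
      · have := ihC hv; simp only [tvars, Finset.mem_erase, Finset.mem_union] at this ⊢; tauto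

theorem single_subst_eq {σ : ℕ → Ty} {a : ℕ} {B : Ty} (h : σ a = B.subst σ) :
    (fun v => (single a B v).subst σ) = σ := by
  funext v
  by_cases hv : v = a
  · subst hv; simp [single, h]
  · simp [single, hv, subst]

def Unifies (σ : ℕ → Ty) (E : List (Ty × Ty)) : Prop :=
  ∀ p ∈ E, p.1.subst σ = p.2.subst σ

def IsMGU (μ : ℕ → Ty) (E : List (Ty × Ty)) : Prop :=
  Unifies μ E ∧ ∀ σ, Unifies σ E → ∃ ρ, σ = fun v => (μ v).subst ρ

def eqnsVars : List (Ty × Ty) → Finset ℕ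
  | [] => ∅
  | (A, B) :: E => A.tvars ∪ B.tvars ∪ eqnsVars E

def eqnsSize : List (Ty × Ty) → ℕ
  | [] => 0
  | (A, B) :: E => A.size + B.size + eqnsSize E

def substEqns (σ : ℕ → Ty) (E : List (Ty × Ty)) : List (Ty × Ty) :=
  E.map fun p => (p.1.subst σ, p.2.subst σ)

@[simp]
theorem unifies_nil (σ : ℕ → Ty) : Unifies σ [] := by simp [Unifies]

@[simp]
theorem unifies_cons {σ : ℕ → Ty} {A B : Ty} {E : List (Ty × Ty)} :
    Unifies σ ((A, B) :: E) ↔ A.subst σ = B.subst σ ∧ Unifies σ E := by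
  simp [Unifies]

theorem unifies_substEqns {σ ρ : ℕ → Ty} {E : List (Ty × Ty)} :
    Unifies ρ (substEqns σ E) ↔ Unifies (fun v => (σ v).subst ρ) E := by
  simp only [Unifies, substEqns, List.forall_mem_map, subst_subst]

theorem isMGU_congr {E E' : List (Ty × Ty)} (h : ∀ σ, Unifies σ E ↔ Unifies σ E')
    {μ : ℕ → Ty} : IsMGU μ E ↔ IsMGU μ E' := by
  simp [IsMGU, h]

theorem isMGU_nil : IsMGU tvar [] :=
  ⟨unifies_nil _, fun σ _ => ⟨σ, rfl⟩⟩

theorem eqnsVars_substEqns_single {a : ℕ} {B : Ty} (hB : a ∉ B.tvars) (E : List (Ty × Ty)) :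
    eqnsVars (substEqns (single a B) E) ⊆ (eqnsVars E ∪ B.tvars).erase a := by
  induction E with
  | nil => simp [substEqns, eqnsVars]
  | cons p E ih =>
      intro v hv
      simp only [substEqns, List.map_cons, eqnsVars, Finset.mem_union] at hv
      have h₁ := @tvars_subst_single _ _ hB p.1 v
      have h₂ := @tvars_subst_single _ _ hB p.2 v
      have h₃ := @ih v
      simp only [substEqns, eqnsVars, Finset.mem_erase, Finset.mem_union] at h₁ h₂ h₃ ⊢
      tauto

theorem card_eqnsVars_substEqns_single_lt {a : ℕ} {B : Ty} (hB : a ∉ B.tvars)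
    (E : List (Ty × Ty)) :
    (eqnsVars (substEqns (single a B) E)).card < (eqnsVars ((tvar a, B) :: E)).card := by
  have hsub : eqnsVars E ∪ B.tvars ⊆ eqnsVars ((tvar a, B) :: E) := by
    intro v; simp only [eqnsVars, Finset.mem_union]; tauto
  calc (eqnsVars (substEqns (single a B) E)).card
      ≤ ((eqnsVars ((tvar a, B) :: E)).erase a).card :=
        Finset.card_le_card <|
          (eqnsVars_substEqns_single hB E).trans (Finset.erase_subset_erase a hsub)
    _ < _ := Finset.card_erase_lt_of_mem (by simp [eqnsVars, tvars])

theorem Unifies.substEqns_single {σ : ℕ → Ty} {a : ℕ} {B : Ty} {E : List (Ty × Ty)}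
    (h : Unifies σ ((tvar a, B) :: E)) : Unifies σ (substEqns (single a B) E) := by
  rw [unifies_cons] at h
  rw [unifies_substEqns, single_subst_eq (σ := σ) h.1]
  exact h.2

theorem isMGU_cons_tvar {a : ℕ} {B : Ty} (hB : a ∉ B.tvars) {E : List (Ty × Ty)} {μ : ℕ → Ty}
    (hμ : IsMGU μ (substEqns (single a B) E)) :
    IsMGU (fun v => (single a B v).subst μ) ((tvar a, B) :: E) := by
  refine ⟨unifies_cons.2 ⟨?_, unifies_substEqns.1 hμ.1⟩, fun σ hσ => ?_⟩
  · calc ((tvar a).subst (single a B)).subst μ = B.subst μ := by simp [subst, single]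
      _ = (B.subst (single a B)).subst μ := by rw [subst_single_of_notMem hB]
      _ = _ := subst_subst ..
  · have hσa : σ a = B.subst σ := (unifies_cons.1 hσ).1
    obtain ⟨ρ, hρ⟩ := hμ.2 σ hσ.substEqns_single
    refine ⟨ρ, ?_⟩
    rw [← single_subst_eq hσa, hρ]
    simp only [subst_subst]

theorem exists_isMGU_cons_tvar {a : ℕ} {B : Ty} {E : List (Ty × Ty)} (hne : tvar a ≠ B)
    (ih : ∀ E', (eqnsVars E').card < (eqnsVars ((tvar a, B) :: E)).card →
      (∃ σ, Unifies σ E') → ∃ μ, IsMGU μ E')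
    (h : ∃ σ, Unifies σ ((tvar a, B) :: E)) : ∃ μ, IsMGU μ ((tvar a, B) :: E) := by
  obtain ⟨σ, hσ⟩ := h
  have hB : a ∉ B.tvars := fun ha =>
    subst_ne_of_mem_tvars ha (Ne.symm hne) σ (unifies_cons.1 hσ).1
  obtain ⟨μ, hμ⟩ :=
    ih _ (card_eqnsVars_substEqns_single_lt hB E) ⟨σ, hσ.substEqns_single⟩
  exact ⟨_, isMGU_cons_tvar hB hμ⟩

theorem unifies_cons_comm {σ : ℕ → Ty} {A B : Ty} {E : List (Ty × Ty)} :
    Unifies σ ((A, B) :: E) ↔ Unifies σ ((B, A) :: E) := by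
  simp [eq_comm]

theorem isMGU_cons_comm {μ : ℕ → Ty} {A B : Ty} {E : List (Ty × Ty)} :
    IsMGU μ ((A, B) :: E) ↔ IsMGU μ ((B, A) :: E) :=
  isMGU_congr fun _ => unifies_cons_comm

theorem card_eqnsVars_cons_comm (A B : Ty) (E : List (Ty × Ty)) :
    (eqnsVars ((A, B) :: E)).card = (eqnsVars ((B, A) :: E)).card := by
  simp only [eqnsVars, Finset.union_comm A.tvars]

theorem exists_isMGU : ∀ E : List (Ty × Ty), (∃ σ, Unifies σ E) → ∃ μ, IsMGU μ E
  | [], _ => ⟨tvar, isMGU_nil⟩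
  | (A, B) :: E, h => by
    by_cases hAB : A = B
    · subst hAB
      have : (eqnsVars E).card ≤ (eqnsVars ((A, A) :: E)).card :=
        Finset.card_le_card Finset.subset_union_right
      have : eqnsSize E < eqnsSize ((A, A) :: E) := by
        have := A.one_le_size; simp only [eqnsSize]; omega
      obtain ⟨μ, hμ⟩ := exists_isMGU E (h.imp fun σ hσ => (unifies_cons.1 hσ).2)
      exact ⟨μ, (isMGU_congr (by simp)).2 hμ⟩
    generalize hC : A = C at h hAB ⊢
    generalize hD : B = D at h hAB ⊢
    cases A with
    | tvar a => subst hC; exact exists_isMGU_cons_tvar hAB (fun E' _ => exists_isMGU E') h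
    | tensor A₁ A₂ | arrow A₁ A₂ =>
      cases B with
      | tvar b =>
          subst hD
          have := card_eqnsVars_cons_comm (tvar b) C E
          obtain ⟨μ, hμ⟩ := exists_isMGU_cons_tvar (Ne.symm hAB)
            (fun E' _ => exists_isMGU E') (h.imp fun _ => unifies_cons_comm.1)
          exact ⟨μ, isMGU_cons_comm.2 hμ⟩
      | tensor B₁ B₂ | arrow B₁ B₂ =>
          -- either the heads agree and the equation splits, or they clash
          first
          | have hsplit : ∀ σ, Unifies σ ((C, D) :: E) ↔
                Unifies σ ((A₁, B₁) :: (A₂, B₂) :: E) := by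
              subst hC hD; simp [subst, and_assoc]
            have : (eqnsVars ((A₁, B₁) :: (A₂, B₂) :: E)).card =
                (eqnsVars ((C, D) :: E)).card := by
              subst hC hD; congr 1; ext; simp only [eqnsVars, tvars, Finset.mem_union]; tauto
            have : eqnsSize ((A₁, B₁) :: (A₂, B₂) :: E) < eqnsSize ((C, D) :: E) := by
              subst hC hD; simp only [eqnsSize, size]; omega
            obtain ⟨μ, hμ⟩ := exists_isMGU _ (h.imp fun σ => (hsplit σ).1)
            exact ⟨μ, (isMGU_congr hsplit).2 hμ⟩
          | subst hC hD; simp [subst] at h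
-- Eliminating a variable decreases the number of variables; the other steps do not increase
-- it and decrease the size.
termination_by E => ((eqnsVars E).card, eqnsSize E)
decreasing_by
  all_goals (subst_vars; rw [Prod.lex_def]; omega)

theorem exists_mgu {L R : Ty} (h : ∃ σ, L.subst σ = R.subst σ) :
    ∃ μ, L.subst μ = R.subst μ ∧
      ∀ σ, L.subst σ = R.subst σ → ∃ ρ, σ = fun v => (μ v).subst ρ := by
  obtain ⟨μ, hμ, hgen⟩ := exists_isMGU [(L, R)] (by simpa using h)
  exact ⟨μ, by simpa using hμ, fun σ hσ => hgen σ (by simpa using hσ)⟩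

end Ty

theorem CtxtSubst_append (Γ Δ : Ctxt) (θ : ℕ → Ty) :
    CtxtSubst (Γ ++ Δ) θ = CtxtSubst Γ θ ++ CtxtSubst Δ θ :=
  List.map_append

theorem CtxtSubst_cons (x : ℕ) (A : Ty) (Γ : Ctxt) (θ : ℕ → Ty) :
    CtxtSubst ((x, A) :: Γ) θ = (x, A.subst θ) :: CtxtSubst Γ θ :=
  rfl

theorem CtxtSubst_CtxtSubst (Γ : Ctxt) (σ ρ : ℕ → Ty) :
    CtxtSubst (CtxtSubst Γ σ) ρ = CtxtSubst Γ fun v => (σ v).subst ρ := by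
  simp [CtxtSubst, Ty.subst_subst]

theorem List.Perm.CtxtSubst {Γ Δ : Ctxt} (h : Γ.Perm Δ) (θ : ℕ → Ty) :
    (CtxtSubst Γ θ).Perm (CtxtSubst Δ θ) :=
  h.map _

theorem perm_cons_cons_of_notMem {x : ℕ} {A B : Ty} {Γ Δ : Ctxt}
    (h : ((x, A) :: Γ).Perm ((x, B) :: Δ)) (hx : x ∉ Δ.map Prod.fst) : A = B ∧ Γ.Perm Δ := by
  obtain rfl : A = B := by
    rcases List.mem_cons.1 (h.subset List.mem_cons_self) with e | hmem
    · exact (Prod.mk.inj e).2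
    · exact absurd (List.mem_map_of_mem hmem) hx
  exact ⟨rfl, h.cons_inv⟩

theorem exists_perm_cons_of_count_eq_one {x : ℕ} {Γ : Ctxt}
    (h : (Γ.map Prod.fst).count x = 1) :
    ∃ A Δ, Γ.Perm ((x, A) :: Δ) ∧ x ∉ Δ.map Prod.fst := by
  obtain ⟨⟨y, A⟩, hmem, hy⟩ := List.mem_map.1 (List.count_pos_iff.1 (h ▸ Nat.one_pos))
  obtain rfl : y = x := hy
  have hperm := List.perm_cons_erase hmem
  refine ⟨A, _, hperm, fun hy => ?_⟩
  have := (hperm.map Prod.fst).count_eq y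
  simp only [List.map_cons, List.count_cons_self, h] at this
  have := List.count_pos_iff.2 hy
  omega

namespace Typed

theorem exch_perm (Γ Δ : Ctxt) (p q : ℕ × Ty) :
    (Γ ++ q :: p :: Δ).Perm (Γ ++ p :: q :: Δ) :=
  (List.Perm.swap p q Δ).append_left Γ

theorem perm_append {Γ Γ' : Ctxt} (hp : Γ.Perm Γ') :
    ∀ {Θ : Ctxt} {t : Tm} {A : Ty}, Typed (Θ ++ Γ) t A → Typed (Θ ++ Γ') t A := by
  induction hp with
  | nil => exact id
  | cons p _ ih =>
      intro Θ t A h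
      simpa using ih (Θ := Θ ++ [p]) (by simpa using h)
  | swap p q Γ => intro Θ t A; exact exch Θ Γ q.1 p.1 q.2 p.2 t A
  | trans _ _ ih₁ ih₂ => exact ih₂ ∘ ih₁

theorem perm {Γ Γ' : Ctxt} {t : Tm} {A : Ty} (h : Typed Γ t A) (hp : Γ.Perm Γ') :
    Typed Γ' t A :=
  perm_append hp (Θ := []) h

theorem subst {Γ : Ctxt} {t : Tm} {A : Ty} (h : Typed Γ t A) (θ : ℕ → Ty) :
    Typed (CtxtSubst Γ θ) t (A.subst θ) := by
  induction h with
  | var x A => exact var x _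
  | exch Γ Δ x y A B t C _ ih =>
      simp only [CtxtSubst_append, CtxtSubst_cons] at ih ⊢
      exact exch _ _ x y _ _ t _ ih
  | lam x A Γ t B _ ih => exact lam x _ _ t _ ih
  | app Γ Δ t s A B _ _ ih₁ ih₂ => rw [CtxtSubst_append]; exact app _ _ t s _ _ ih₁ ih₂
  | pair Γ Δ s t A B _ _ ih₁ ih₂ => rw [CtxtSubst_append]; exact pair _ _ s t _ _ ih₁ ih₂
  | letp Γ Δ s t x y A B C _ _ ih₁ ih₂ =>
      rw [CtxtSubst_append]; exact letp _ _ s t x y _ _ _ ih₁ ih₂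

theorem var_inv {Γ : Ctxt} {x : ℕ} {A : Ty} (h : Typed Γ (.var x) A) : Γ.Perm [(x, A)] := by
  generalize hu : Tm.var x = u at h
  induction h with
  | var => cases hu; rfl
  | exch Γ Δ y z B C _ _ _ ih => exact (exch_perm Γ Δ _ _).trans (ih hu)
  | _ => cases hu

theorem lam_inv {Γ : Ctxt} {x : ℕ} {t : Tm} {C : Ty} (h : Typed Γ (.lam x t) C) :
    ∃ A B, C = .arrow A B ∧ Typed ((x, A) :: Γ) t B := by
  generalize hu : Tm.lam x t = u at h
  induction h with
  | lam _ A _ _ B h => cases hu; exact ⟨A, B, rfl, h⟩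
  | exch Γ Δ y z D E _ _ _ ih =>
      obtain ⟨A, B, rfl, h⟩ := ih hu
      exact ⟨A, B, rfl, h.perm (exch_perm ((x, A) :: Γ) Δ _ _).symm⟩
  | _ => cases hu

theorem app_inv {Γ : Ctxt} {t s : Tm} {B : Ty} (h : Typed Γ (.app t s) B) :
    ∃ Γ₁ Γ₂ A, Γ.Perm (Γ₁ ++ Γ₂) ∧ Typed Γ₁ t (.arrow A B) ∧ Typed Γ₂ s A := by
  generalize hu : Tm.app t s = u at h
  induction h with
  | app Γ₁ Γ₂ _ _ A _ h₁ h₂ => cases hu; exact ⟨Γ₁, Γ₂, A, .refl _, h₁, h₂⟩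
  | exch Γ Δ y z D E _ _ _ ih =>
      obtain ⟨Γ₁, Γ₂, A, hp, h₁, h₂⟩ := ih hu
      exact ⟨Γ₁, Γ₂, A, (exch_perm Γ Δ _ _).trans hp, h₁, h₂⟩
  | _ => cases hu

theorem pair_inv {Γ : Ctxt} {s t : Tm} {C : Ty} (h : Typed Γ (.pair s t) C) :
    ∃ Γ₁ Γ₂ A B, Γ.Perm (Γ₁ ++ Γ₂) ∧ C = .tensor A B ∧ Typed Γ₁ s A ∧ Typed Γ₂ t B := by
  generalize hu : Tm.pair s t = u at h
  induction h with
  | pair Γ₁ Γ₂ _ _ A B h₁ h₂ => cases hu; exact ⟨Γ₁, Γ₂, A, B, .refl _, rfl, h₁, h₂⟩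
  | exch Γ Δ y z D E _ _ _ ih =>
      obtain ⟨Γ₁, Γ₂, A, B, hp, hC, h₁, h₂⟩ := ih hu
      exact ⟨Γ₁, Γ₂, A, B, (exch_perm Γ Δ _ _).trans hp, hC, h₁, h₂⟩
  | _ => cases hu

theorem letp_inv {Γ : Ctxt} {x y : ℕ} {s t : Tm} {C : Ty} (h : Typed Γ (.letp x y s t) C) :
    ∃ Γ₁ Γ₂ A B, Γ.Perm (Γ₁ ++ Γ₂) ∧ Typed Γ₁ s (.tensor A B) ∧
      Typed ((x, A) :: (y, B) :: Γ₂) t C := by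
  generalize hu : Tm.letp x y s t = u at h
  induction h with
  | letp Γ₁ Γ₂ _ _ _ _ A B _ h₁ h₂ => cases hu; exact ⟨Γ₁, Γ₂, A, B, .refl _, h₁, h₂⟩
  | exch Γ Δ y z D E _ _ _ ih =>
      obtain ⟨Γ₁, Γ₂, A, B, hp, h₁, h₂⟩ := ih hu
      exact ⟨Γ₁, Γ₂, A, B, (exch_perm Γ Δ _ _).trans hp, h₁, h₂⟩
  | _ => cases hu

theorem lam_lam_iff {Γ : Ctxt} {x y : ℕ} {t : Tm} {A B C : Ty} :
    Typed Γ (.lam x (.lam y t)) (.arrow A (.arrow B C)) ↔ Typed ((x, A) :: (y, B) :: Γ) t C := by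
  constructor
  · intro h
    obtain ⟨A', B', he, h⟩ := h.lam_inv
    obtain ⟨rfl, rfl⟩ := Ty.arrow.inj he
    obtain ⟨A'', B'', he, h⟩ := h.lam_inv
    obtain ⟨rfl, rfl⟩ := Ty.arrow.inj he
    exact exch [] Γ y x B A t C h
  · intro h
    exact lam _ _ _ _ _ (lam _ _ _ _ _ (exch [] Γ x y A B t C h))

theorem count_map_fst {Γ : Ctxt} {t : Tm} {A : Ty} (h : Typed Γ t A) {x : ℕ}
    (hx : t.binds x = 0) : (Γ.map Prod.fst).count x = t.uses x := by
  induction h with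
  | var y A => by_cases hy : y = x <;> simp [Tm.uses, hy]
  | exch Γ Δ y z B C _ _ _ ih => rw [((exch_perm Γ Δ _ _).map Prod.fst).count_eq, ih hx]
  | lam y B Γ t C _ ih =>
      simp only [Tm.binds, Nat.add_eq_zero_iff, ite_eq_right_iff, one_ne_zero] at hx
      have hy : y ≠ x := hx.1
      simpa [Tm.uses, List.count_cons, hy] using ih hx.2
  | app Γ Δ _ _ _ _ _ _ ih₁ ih₂ | pair Γ Δ _ _ _ _ _ _ ih₁ ih₂ =>
      simp only [Tm.binds, Nat.add_eq_zero_iff] at hx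
      simp [Tm.uses, ih₁ hx.1, ih₂ hx.2]
  | letp Γ Δ _ _ y z _ _ _ _ _ ih₁ ih₂ =>
      simp only [Tm.binds, Nat.add_eq_zero_iff, ite_eq_right_iff, one_ne_zero] at hx
      obtain ⟨⟨⟨hy, hz⟩, hs⟩, ht⟩ := hx
      have := ih₂ ht
      simp only [List.map_cons, List.count_cons, beq_iff_eq] at this
      rw [if_neg hy, if_neg hz] at this
      simp [Tm.uses, ih₁ hs, ← this]

end Typed

def IsPrincipal (t : Tm) (Γ₀ : Ctxt) (A₀ : Ty) : Prop :=
  Typed Γ₀ t A₀ ∧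
    ∀ Γ A, Typed Γ t A → ∃ θ : ℕ → Ty, A = A₀.subst θ ∧ Γ.Perm (CtxtSubst Γ₀ θ)

-- The type variables of the two premises of a binary rule are renamed apart into odd and even
-- ones, which leaves `0` fresh for the result type of an application.
def renameOdd (v : ℕ) : Ty := .tvar (2 * v + 1)

def renameEven (v : ℕ) : Ty := .tvar (2 * v + 2)

theorem exists_subst_renameOdd_renameEven (σ₁ σ₂ : ℕ → Ty) (R : Ty) :
    ∃ θ : ℕ → Ty, θ 0 = R ∧ (fun v => (renameOdd v).subst θ) = σ₁ ∧
      (fun v => (renameEven v).subst θ) = σ₂ := by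
  refine ⟨fun | 0 => R | n + 1 => if n % 2 = 0 then σ₁ (n / 2) else σ₂ (n / 2), rfl, ?_, ?_⟩
  · funext v; simp [renameOdd, Ty.subst]
  · funext v
    simp [renameEven, Ty.subst, Nat.mul_add_div]

theorem isPrincipal_var (x : ℕ) : IsPrincipal (.var x) [(x, .tvar 0)] (.tvar 0) :=
  ⟨.var x _, fun _ A h => ⟨fun _ => A, rfl, h.var_inv⟩⟩

theorem exists_isPrincipal_of_unifiers {t : Tm} {Γ : Ctxt} {A L R : Ty}
    (sound : ∀ θ, L.subst θ = R.subst θ → Typed (CtxtSubst Γ θ) t (A.subst θ))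
    (complete : ∀ Γ' A', Typed Γ' t A' →
      ∃ θ, L.subst θ = R.subst θ ∧ A' = A.subst θ ∧ Γ'.Perm (CtxtSubst Γ θ))
    (htyp : ∃ Γ' A', Typed Γ' t A') : ∃ Γ₀ A₀, IsPrincipal t Γ₀ A₀ := by
  obtain ⟨Γ', A', h'⟩ := htyp
  obtain ⟨θ, hθ, -⟩ := complete Γ' A' h'
  obtain ⟨μ, hμ, hgen⟩ := Ty.exists_mgu ⟨θ, hθ⟩
  refine ⟨CtxtSubst Γ μ, A.subst μ, sound μ hμ, fun Γ' A' h' => ?_⟩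
  obtain ⟨θ, hθ, rfl, hp⟩ := complete Γ' A' h'
  obtain ⟨ρ, rfl⟩ := hgen θ hθ
  exact ⟨ρ, (Ty.subst_subst ..).symm, by rwa [CtxtSubst_CtxtSubst]⟩

namespace IsPrincipal

variable {t s : Tm} {Γ₁ Γ₂ : Ctxt} {A₁ A₂ : Ty}

theorem lam {u : Tm} {Γu : Ctxt} {Au : Ty} {x : ℕ} (hu : IsPrincipal u Γu Au)
    (hbind : u.binds x = 0) (huse : u.uses x ≤ 1) {Γ : Ctxt} {A B : Ty}
    (h : Typed ((x, A) :: Γ) u B) : ∃ Γ₀ A₀, IsPrincipal (.lam x u) Γ₀ (.arrow A₀ Au) := by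
  have hcount : (Γu.map Prod.fst).count x = 1 := by
    have := h.count_map_fst hbind
    rw [List.map_cons, List.count_cons_self] at this
    rw [hu.1.count_map_fst hbind]
    omega
  obtain ⟨A₀, Γ₀, hperm, hx⟩ := exists_perm_cons_of_count_eq_one hcount
  refine ⟨Γ₀, A₀, .lam _ _ _ _ _ (hu.1.perm hperm), fun Γ' C h' => ?_⟩
  obtain ⟨A', B', rfl, hbody⟩ := h'.lam_inv
  obtain ⟨θ, rfl, hθ⟩ := hu.2 _ _ hbody
  obtain ⟨rfl, hΓ⟩ :=
    perm_cons_cons_of_notMem (hθ.trans (hperm.CtxtSubst θ)) (by simpa using hx)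
  exact ⟨θ, rfl, hΓ⟩

theorem app (h₁ : IsPrincipal t Γ₁ A₁) (h₂ : IsPrincipal s Γ₂ A₂)
    (h : ∃ Γ A, Typed Γ (.app t s) A) : ∃ Γ₀ A₀, IsPrincipal (.app t s) Γ₀ A₀ := by
  refine exists_isPrincipal_of_unifiers (Γ := CtxtSubst Γ₁ renameOdd ++ CtxtSubst Γ₂ renameEven)
    (A := .tvar 0) (L := A₁.subst renameOdd) (R := .arrow (A₂.subst renameEven) (.tvar 0))
    (fun θ hθ => ?_) (fun Γ' C h' => ?_) h
  · rw [CtxtSubst_append]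
    refine .app _ _ t s _ _ ?_ ((h₂.1.subst _).subst θ)
    simpa only [hθ, Ty.subst] using (h₁.1.subst renameOdd).subst θ
  · obtain ⟨Γa, Γb, A, hp, ha, hb⟩ := h'.app_inv
    obtain ⟨σ₁, hσ₁, hpa⟩ := h₁.2 _ _ ha
    obtain ⟨σ₂, rfl, hpb⟩ := h₂.2 _ _ hb
    obtain ⟨θ, h0, hθ₁, hθ₂⟩ := exists_subst_renameOdd_renameEven σ₁ σ₂ C
    refine ⟨θ, ?_, h0.symm, ?_⟩
    · simp only [Ty.subst, Ty.subst_subst, hθ₁, hθ₂, h0, ← hσ₁]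
    · rw [CtxtSubst_append, CtxtSubst_CtxtSubst, CtxtSubst_CtxtSubst, hθ₁, hθ₂]
      exact hp.trans (hpa.append hpb)

theorem pair (h₁ : IsPrincipal t Γ₁ A₁) (h₂ : IsPrincipal s Γ₂ A₂) :
    IsPrincipal (.pair t s) (CtxtSubst Γ₁ renameOdd ++ CtxtSubst Γ₂ renameEven)
      (.tensor (A₁.subst renameOdd) (A₂.subst renameEven)) := by
  refine ⟨.pair _ _ t s _ _ (h₁.1.subst _) (h₂.1.subst _), fun Γ' C h' => ?_⟩
  obtain ⟨Γa, Γb, A, B, hp, rfl, ha, hb⟩ := h'.pair_inv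
  obtain ⟨σ₁, rfl, hpa⟩ := h₁.2 _ _ ha
  obtain ⟨σ₂, rfl, hpb⟩ := h₂.2 _ _ hb
  obtain ⟨θ, -, hθ₁, hθ₂⟩ := exists_subst_renameOdd_renameEven σ₁ σ₂ (.tvar 0)
  refine ⟨θ, ?_, ?_⟩
  · simp only [Ty.subst, Ty.subst_subst, hθ₁, hθ₂]
  · rw [CtxtSubst_append, CtxtSubst_CtxtSubst, CtxtSubst_CtxtSubst, hθ₁, hθ₂]
    exact hp.trans (hpa.append hpb)

/-- `let (x, y) = s in w` is typed like `λx.λy.w` applied to the two components of `s`. -/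
theorem letp {x y : ℕ} {w : Tm} {Ax Ay Aw : Ty} (hs : IsPrincipal s Γ₁ A₁)
    (hw : IsPrincipal (.lam x (.lam y w)) Γ₂ (.arrow Ax (.arrow Ay Aw)))
    (h : ∃ Γ A, Typed Γ (.letp x y s w) A) : ∃ Γ₀ A₀, IsPrincipal (.letp x y s w) Γ₀ A₀ := by
  refine exists_isPrincipal_of_unifiers (Γ := CtxtSubst Γ₁ renameOdd ++ CtxtSubst Γ₂ renameEven)
    (A := Aw.subst renameEven) (L := A₁.subst renameOdd)
    (R := .tensor (Ax.subst renameEven) (Ay.subst renameEven))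
    (fun θ hθ => ?_) (fun Γ' C h' => ?_) h
  · rw [CtxtSubst_append]
    refine .letp _ _ s w x y _ _ _ ?_ (Typed.lam_lam_iff.1 ((hw.1.subst renameEven).subst θ))
    simpa only [hθ, Ty.subst] using (hs.1.subst renameOdd).subst θ
  · obtain ⟨Γa, Γb, D, E, hp, ha, hb⟩ := h'.letp_inv
    obtain ⟨σ₁, hσ₁, hpa⟩ := hs.2 _ _ ha
    obtain ⟨σ₂, hσ₂, hpb⟩ := hw.2 _ _ (Typed.lam_lam_iff.2 hb)
    simp only [Ty.subst, Ty.arrow.injEq] at hσ₂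
    obtain ⟨rfl, rfl, rfl⟩ := hσ₂
    obtain ⟨θ, -, hθ₁, hθ₂⟩ := exists_subst_renameOdd_renameEven σ₁ σ₂ (.tvar 0)
    refine ⟨θ, ?_, ?_, ?_⟩
    · simp only [Ty.subst, Ty.subst_subst, hθ₁, hθ₂, ← hσ₁]
    · simp only [Ty.subst_subst, hθ₂]
    · rw [CtxtSubst_append, CtxtSubst_CtxtSubst, CtxtSubst_CtxtSubst, hθ₁, hθ₂]
      exact hp.trans (hpa.append hpb)

end IsPrincipal

namespace Tm

def AtMostOnce (t : Tm) : Prop :=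
  ∀ x, t.uses x ≤ 1 ∧ t.binds x ≤ 1

theorem atMostOnce_of_add {t s : Tm}
    (h : ∀ x, t.uses x + s.uses x ≤ 1 ∧ t.binds x + s.binds x ≤ 1) :
    t.AtMostOnce ∧ s.AtMostOnce :=
  ⟨fun x => by have := h x; omega, fun x => by have := h x; omega⟩

theorem AtMostOnce.lam {x : ℕ} {u : Tm} (h : (Tm.lam x u).AtMostOnce) :
    u.AtMostOnce ∧ u.binds x = 0 := by
  refine ⟨fun z => ⟨(h z).1, (Nat.le_add_left _ _).trans (h z).2⟩, ?_⟩
  have := (h x).2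
  simp only [binds, if_pos] at this
  omega

theorem AtMostOnce.letp {x y : ℕ} {s w : Tm} (h : (Tm.letp x y s w).AtMostOnce) :
    s.AtMostOnce ∧ w.AtMostOnce ∧ x ≠ y ∧ w.binds x = 0 ∧ w.binds y = 0 := by
  obtain ⟨hs, hw⟩ := atMostOnce_of_add fun z =>
    ⟨(h z).1, by have := (h z).2; simp only [binds] at this; omega⟩
  have hx := (h x).2
  have hy := (h y).2
  have hxy : x ≠ y := by rintro rfl; simp [binds] at hx; omega
  simp [binds, hxy, hxy.symm] at hx hy
  exact ⟨hs, hw, hxy, by omega, by omega⟩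

end Tm

theorem exists_isPrincipal (t : Tm) (hlin : t.AtMostOnce) (h : ∃ Γ A, Typed Γ t A) :
    ∃ Γ₀ A₀, IsPrincipal t Γ₀ A₀ := by
  induction t with
  | var x => exact ⟨_, _, isPrincipal_var x⟩
  | app t s iht ihs =>
      obtain ⟨hlt, hls⟩ := Tm.atMostOnce_of_add hlin
      obtain ⟨Γ, A, h⟩ := h
      obtain ⟨Γ₁, Γ₂, B, -, h₁, h₂⟩ := h.app_inv
      obtain ⟨_, _, ht⟩ := iht hlt ⟨_, _, h₁⟩
      obtain ⟨_, _, hs⟩ := ihs hls ⟨_, _, h₂⟩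
      exact ht.app hs ⟨_, _, h⟩
  | pair t s iht ihs =>
      obtain ⟨hlt, hls⟩ := Tm.atMostOnce_of_add hlin
      obtain ⟨Γ, A, h⟩ := h
      obtain ⟨Γ₁, Γ₂, B, C, -, -, h₁, h₂⟩ := h.pair_inv
      obtain ⟨_, _, ht⟩ := iht hlt ⟨_, _, h₁⟩
      obtain ⟨_, _, hs⟩ := ihs hls ⟨_, _, h₂⟩
      exact ⟨_, _, ht.pair hs⟩
  | lam x u ih =>
      obtain ⟨hlu, hux⟩ := hlin.lam
      obtain ⟨Γ, A, h⟩ := h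
      obtain ⟨B, C, -, hu⟩ := h.lam_inv
      obtain ⟨_, _, hpu⟩ := ih hlu ⟨_, _, hu⟩
      obtain ⟨_, _, hp⟩ := hpu.lam hux (hlu x).1 hu
      exact ⟨_, _, hp⟩
  | letp x y s w ihs ihw =>
      obtain ⟨hls, hlw, hxy, hwx, hwy⟩ := hlin.letp
      obtain ⟨Γ, A, h⟩ := h
      obtain ⟨Γ₁, Γ₂, D, E, -, hs, hw⟩ := h.letp_inv
      obtain ⟨_, _, hps⟩ := ihs hls ⟨_, _, hs⟩
      obtain ⟨_, _, hpw⟩ := ihw hlw ⟨_, _, hw⟩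
      have hw' : Typed ((y, E) :: (x, D) :: Γ₂) w A := .exch [] _ x y D E w A hw
      obtain ⟨_, _, hpy⟩ := hpw.lam hwy (hlw y).1 hw'
      obtain ⟨_, _, hpx⟩ :=
        hpy.lam (by simp [Tm.binds, hxy.symm, hwx]) (hlw x).1 (.lam y E _ w A hw')
      exact hps.letp hpx ⟨_, _, h⟩

/-- **Principal Type Proposition.** Every typable untyped linear λ-term has a principal
typing `Γ0 ⊢ t : A0`: every derivable typing of `t` is an instance of it (up to the
exchange of context entries that is built into the system). -/
theorem principal_typing (t : Tm) (hlin : t.LinearTm)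
    (htypable : ∃ (Γ : Ctxt) (A : Ty), Typed Γ t A) :
    ∃ (Γ0 : Ctxt) (A0 : Ty), Typed Γ0 t A0 ∧
      ∀ (Γ' : Ctxt) (A' : Ty), Typed Γ' t A' →
        ∃ θ : ℕ → Ty, A' = A0.subst θ ∧ Γ'.Perm (CtxtSubst Γ0 θ) :=
  exists_isPrincipal t (fun x => ⟨hlin.1 x, hlin.2.1 x⟩) htypable
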